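/- arXiv:1204.1545 — 2 statements merged into one kernel-verified Lean document; each statement's English description precedes it below -/
import Mathlib

section
/- For the octonion algebra 𝕆 over ℝ with standard basis e_0 = 1, e_1, ..., e_7, the conjugate of any octonion z satisfies z* = -(1/6) Σ_{p=0}^{7} (e_p z) e_p. -/
/-- The octonions, constructed by the Cayley–Dickson doubling of the quaternions. -/
def Octonion : Type := Quaternion ℝ × Quaternion ℝ

noncomputable instance : AddCommGroup Octonion :=
  inferInstanceAs (AddCommGroup (Quaternion ℝ × Quaternion ℝ))
noncomputable instance : Module ℝ Octonion :=
  inferInstanceAs (Module ℝ (Quaternion ℝ × Quaternion ℝ))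

/-- Cayley–Dickson multiplication: (a,b)(c,d) = (ac - d*b, da + bc*). -/
noncomputable instance : Mul Octonion :=
  ⟨fun x y => (x.1 * y.1 - star y.2 * x.2, y.2 * x.1 + x.2 * star y.1)⟩

/-- Octonion conjugation: (a,b)* = (a*, -b). -/
noncomputable def oconj (x : Octonion) : Octonion := (star x.1, -x.2)

/-- The standard basis e₀ = 1, e₁, ..., e₇ of the octonions. -/
noncomputable def e : Fin 8 → Octonion
  | 0 => ((⟨1,0,0,0⟩ : Quaternion ℝ), 0)
  | 1 => ((⟨0,1,0,0⟩ : Quaternion ℝ), 0)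
  | 2 => ((⟨0,0,1,0⟩ : Quaternion ℝ), 0)
  | 3 => ((⟨0,0,0,1⟩ : Quaternion ℝ), 0)
  | 4 => (0, (⟨1,0,0,0⟩ : Quaternion ℝ))
  | 5 => (0, (⟨0,1,0,0⟩ : Quaternion ℝ))
  | 6 => (0, (⟨0,0,1,0⟩ : Quaternion ℝ))
  | 7 => (0, (⟨0,0,0,1⟩ : Quaternion ℝ))


/-! Write `z = (a, b)` in Cayley–Dickson form. For a quaternion `q` of norm one, the basis element
`(q, 0)` sends `z` to `(q a q, b)` and `(0, q)` sends it to `(-a*, -q b* q)`. Summing over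
`q ∈ {1, i, j, k}` and using the quaternion identity `a + i a i + j a j + k a k = -2 a*` gives
`∑ e_p z e_p = (-2 a* - 4 a*, 4 b + 2 b) = -6 z*`. -/

open scoped Quaternion

namespace Quaternion

variable {R : Type*} [CommRing R]

def i : ℍ[R] := ⟨0, 1, 0, 0⟩
def j : ℍ[R] := ⟨0, 0, 1, 0⟩
def k : ℍ[R] := ⟨0, 0, 0, 1⟩

@[simp] theorem normSq_i : normSq (i : ℍ[R]) = 1 := by rw [normSq_def']; simp [i]
@[simp] theorem normSq_j : normSq (j : ℍ[R]) = 1 := by rw [normSq_def']; simp [j]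
@[simp] theorem normSq_k : normSq (k : ℍ[R]) = 1 := by rw [normSq_def']; simp [k]

theorem sum_basis_mul_mul_basis (a : ℍ[R]) :
    a + i * a * i + j * a * j + k * a * k = (-2 : R) • star a := by
  ext <;>
    simp only [re_add, imI_add, imJ_add, imK_add, re_mul, imI_mul, imJ_mul, imK_mul, re_smul,
      imI_smul, imJ_smul, imK_smul, re_star, imI_star, imJ_star, imK_star, smul_eq_mul] <;>
    simp only [i, j, k] <;> ring

end Quaternion

namespace Octonion

open Quaternion

def mk (a b : ℍ[ℝ]) : Octonion := (a, b)

theorem mk_fst_snd (z : Octonion) : mk z.1 z.2 = z := rfl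

theorem mk_add_mk (a b c d : ℍ[ℝ]) : mk a b + mk c d = mk (a + c) (b + d) := rfl

theorem smul_mk (r : ℝ) (a b : ℍ[ℝ]) : r • mk a b = mk (r • a) (r • b) := rfl

theorem mk_mul_mk (a b c d : ℍ[ℝ]) :
    mk a b * mk c d = mk (a * c - star d * b) (d * a + b * star c) := rfl

theorem oconj_mk (a b : ℍ[ℝ]) : oconj (mk a b) = mk (star a) (-b) := rfl

theorem e_eq : e = ![mk 1 0, mk i 0, mk j 0, mk k 0, mk 0 1, mk 0 i, mk 0 j, mk 0 k] := by
  funext p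
  fin_cases p <;> rfl

theorem mk_zero_mul_mul_mk_zero (q a b : ℍ[ℝ]) :
    mk q 0 * mk a b * mk q 0 = mk (q * a * q) (normSq q • b) := by
  simp [mk_mul_mk, mul_assoc, self_mul_star, mul_coe_eq_smul]

theorem zero_mk_mul_mul_zero_mk (q a b : ℍ[ℝ]) :
    mk 0 q * mk a b * mk 0 q = mk (-(normSq q • star a)) (-(q * star b * q)) := by
  simp [mk_mul_mk, ← mul_assoc, star_mul_self, coe_mul_eq_smul]

theorem sum_e_mul_mk_mul_e (a b : ℍ[ℝ]) :
    ∑ p, e p * mk a b * e p = (-6 : ℝ) • oconj (mk a b) := by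
  simp only [Fin.sum_univ_eight, e_eq, Matrix.cons_val, mk_zero_mul_mul_mk_zero,
    zero_mk_mul_mul_zero_mk, mk_add_mk, oconj_mk, smul_mk]
  congr 1
  · rw [one_mul, mul_one, sum_basis_mul_mul_basis]
    simp only [map_one, normSq_i, normSq_j, normSq_k, one_smul]
    module
  · simp only [one_mul, mul_one, map_one, normSq_i, normSq_j, normSq_k, one_smul]
    have h := sum_basis_mul_mul_basis (star b)
    rw [star_star] at h
    linear_combination (norm := module) -h

end Octonion

theorem octonion_conj_formula (z : Octonion) :
    oconj z = -((1 : ℝ) / 6) • (∑ p : Fin 8, (e p * z) * e p) := by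
  rw [← Octonion.mk_fst_snd z, Octonion.sum_e_mul_mk_mul_e, smul_smul]
  norm_num
end

section
/- Let M be a compact smooth manifold of dimension d and f : M → ℝ^N a smooth immersion with N > 2d. Then there exists a unit vector v ∈ ℝ^N such that the orthogonal projection onto v^⊥ composed with f is still an immersion M → ℝ^{N-1}. -/
/-!
The vectors `df_y(u)`, for `y ∈ M` and `u ∈ T_yM`, form the image of the `2d`-dimensional
tangent bundle under a map which, in each of finitely many charts, is `C¹` and hence locally
Lipschitz. This set therefore has Hausdorff dimension at most `2d < N`, so some unit vector `v`
lies outside it. Since every `df_y` has image a linear subspace avoiding `v`, its composition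
with the orthogonal projection onto `v^⊥`, whose kernel is `ℝ ∙ v`, stays injective.
-/

open scoped Manifold RealInnerProductSpace
open Set Module Function

section TangentImage

variable {E F : Type*} [NormedAddCommGroup E] [NormedSpace ℝ E]
  [NormedAddCommGroup F] [NormedSpace ℝ F]

def tangentImage (g : E → F) (U : Set E) : Set F :=
  (fun p : E × E => fderiv ℝ g p.1 p.2) '' (U ×ˢ univ)

theorem ContDiffOn.contDiffOn_fderiv_apply_prod {g : E → F} {U : Set E} (hU : IsOpen U)
    (hg : ContDiffOn ℝ 2 g U) :
    ContDiffOn ℝ 1 (fun p : E × E => fderiv ℝ g p.1 p.2) (U ×ˢ univ) := by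
  have hfderiv : ContDiffOn ℝ 1 (fderiv ℝ g) U := hg.fderiv_of_isOpen hU (by norm_num)
  exact isBoundedBilinearMap_apply.contDiff.comp_contDiffOn
    ((hfderiv.comp (s := U ×ˢ univ) contDiff_fst.contDiffOn mapsTo_fst_prod).prodMk
      contDiff_snd.contDiffOn)

theorem dimH_tangentImage_le [FiniteDimensional ℝ E] {g : E → F} {U : Set E} (hU : IsOpen U)
    (hg : ContDiffOn ℝ 2 g U) : dimH (tangentImage g U) ≤ 2 * finrank ℝ E := by
  have hopen : IsOpen (U ×ˢ (univ : Set E)) := hU.prod isOpen_univ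
  calc dimH (tangentImage g U) ≤ dimH (U ×ˢ (univ : Set E)) :=
        dimH_image_le_of_locally_lipschitzOn fun p hp =>
          ((hg.contDiffOn_fderiv_apply_prod hU).contDiffAt
            (hopen.mem_nhds hp)).exists_lipschitzOnWith.imp fun _ ⟨t, ht, hK⟩ =>
              ⟨t, nhdsWithin_le_nhds ht, hK⟩
    _ ≤ dimH (univ : Set (E × E)) := dimH_mono (subset_univ _)
    _ = 2 * finrank ℝ E := by
      rw [Real.dimH_univ_eq_finrank, finrank_prod, two_mul, Nat.cast_add]

end TangentImage

section Manifold

variable {E H M F : Type*} [NormedAddCommGroup E] [NormedSpace ℝ E] [TopologicalSpace H]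
  {I : ModelWithCorners ℝ E H} [TopologicalSpace M] [ChartedSpace H M]
  [IsManifold I 2 M] [NormedAddCommGroup F] [NormedSpace ℝ F] {f : M → F}

theorem ContMDiff.contDiffOn_comp_extChartAt_symm (hf : ContMDiff I 𝓘(ℝ, F) 2 f) (x : M) :
    ContDiffOn ℝ 2 (f ∘ (extChartAt I x).symm) (extChartAt I x).target :=
  contMDiffOn_iff_contDiffOn.1 (hf.comp_contMDiffOn (contMDiffOn_extChartAt_symm x))

theorem ContMDiff.mfderiv_apply_mem_tangentImage [I.Boundaryless]
    (hf : ContMDiff I 𝓘(ℝ, F) 2 f) {x y : M} (hy : y ∈ (chartAt H x).source) (u : E) :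
    (mfderiv I 𝓘(ℝ, F) f y u : F) ∈
      tangentImage (f ∘ (extChartAt I x).symm) (extChartAt I x).target := by
  set e := extChartAt I x
  have hy' : y ∈ e.source := by rwa [extChartAt_source]
  have hey : e y ∈ e.target := e.map_source hy'
  have hg : DifferentiableAt ℝ (f ∘ e.symm) (e y) :=
    ((hf.contDiffOn_comp_extChartAt_symm x).differentiableOn (by norm_num)).differentiableAt
      ((isOpen_extChartAt_target x).mem_nhds hey)
  have hfe : f =ᶠ[nhds y] (f ∘ e.symm) ∘ e := by
    filter_upwards [extChartAt_source_mem_nhds' hy'] with z hz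
    rw [comp_apply, comp_apply, e.left_inv hz]
  have hchain : mfderiv I 𝓘(ℝ, F) f y =
      (fderiv ℝ (f ∘ e.symm) (e y)).comp (mfderiv I 𝓘(ℝ, E) e y) := by
    rw [hfe.mfderiv_eq, ← mfderiv_eq_fderiv]
    exact mfderiv_comp y hg.mdifferentiableAt (mdifferentiableAt_extChartAt hy)
  exact ⟨(e y, mfderiv I 𝓘(ℝ, E) e y u), ⟨hey, trivial⟩, by rw [hchain]; rfl⟩

theorem ContMDiff.dimH_iUnion_range_mfderiv_le [I.Boundaryless] [FiniteDimensional ℝ E]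
    [CompactSpace M] (hf : ContMDiff I 𝓘(ℝ, F) 2 f) :
    dimH (⋃ y : M, range (mfderiv I 𝓘(ℝ, F) f y : E → F)) ≤ 2 * finrank ℝ E := by
  obtain ⟨T, hT⟩ := isCompact_univ.elim_finite_subcover (fun x : M => (chartAt H x).source)
    (fun x => (chartAt H x).open_source) (fun y _ => mem_iUnion.2 ⟨y, mem_chart_source H y⟩)
  have hcover : (⋃ y : M, range (mfderiv I 𝓘(ℝ, F) f y : E → F)) ⊆
      ⋃ x ∈ (T : Set M), tangentImage (f ∘ (extChartAt I x).symm) (extChartAt I x).target := by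
    rintro _ ⟨_, ⟨y, rfl⟩, u, rfl⟩
    obtain ⟨x, hxT, hy⟩ := mem_iUnion₂.1 (hT (mem_univ y))
    exact mem_biUnion hxT (hf.mfderiv_apply_mem_tangentImage hy u)
  refine (dimH_mono hcover).trans ?_
  rw [dimH_bUnion T.countable_toSet]
  exact iSup₂_le fun x _ => dimH_tangentImage_le (isOpen_extChartAt_target x)
    (hf.contDiffOn_comp_extChartAt_symm x)

end Manifold

section Projection

variable {V W : Type*} [AddCommGroup V] [Module ℝ V] [NormedAddCommGroup W]
  [InnerProductSpace ℝ W]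

theorem starProjection_orthogonal_unit_singleton {v : W} (hv : ‖v‖ = 1) (w : W) :
    (ℝ ∙ v)ᗮ.starProjection w = w - ⟪v, w⟫ • v := by
  rw [Submodule.starProjection_orthogonal, sub_apply,
    Submodule.starProjection_unit_singleton ℝ hv, ContinuousLinearMap.id_apply]

theorem injective_starProjection_orthogonal_singleton_comp {D : V →ₗ[ℝ] W} (hD : Injective D)
    {v : W} (hv : v ∉ LinearMap.range D) : Injective ((ℝ ∙ v)ᗮ.starProjection ∘ D) := by
  refine (injective_iff_map_eq_zero ((ℝ ∙ v)ᗮ.starProjection.toLinearMap ∘ₗ D)).2 fun u hu => ?_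
  have hspan : D u ∈ ℝ ∙ v := by
    rw [← Submodule.orthogonal_orthogonal (ℝ ∙ v), ← Submodule.ker_starProjection]
    exact hu
  have hzero : D u = 0 :=
    (Submodule.disjoint_def.1 (Submodule.disjoint_span_singleton_of_notMem hv)) _
      (LinearMap.mem_range_self D u) hspan
  exact (map_eq_zero_iff D hD).1 hzero

end Projection

theorem exists_norm_eq_one_notMem_of_dimH_lt {E : Type*} [NormedAddCommGroup E]
    [NormedSpace ℝ E] [FiniteDimensional ℝ E] {s : Set E} (hs : dimH s < finrank ℝ E)
    (hsmul : ∀ (c : ℝ), ∀ x ∈ s, c • x ∈ s) : ∃ v : E, ‖v‖ = 1 ∧ v ∉ s := by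
  have hs0 : dimH (insert 0 s) < finrank ℝ E := by
    rwa [insert_eq, dimH_union, dimH_singleton, max_eq_right zero_le]
  obtain ⟨w, hw⟩ := (dense_compl_of_dimH_lt_finrank hs0).nonempty
  have hw0 : w ≠ 0 := fun h => hw (h ▸ mem_insert 0 s)
  refine ⟨‖w‖⁻¹ • w, norm_smul_inv_norm hw0, fun hv => hw (mem_insert_of_mem 0 ?_)⟩
  simpa [smul_smul, norm_ne_zero_iff.2 hw0] using hsmul ‖w‖ _ hv

/-- Projection step for immersions: a compact d-manifold smoothly immersed in
ℝᴺ with N > 2d can be projected along some unit direction v, the orthogonal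
projection x ↦ x - ⟪v,x⟫v onto v^⊥ remaining an immersion. -/
theorem immersion_projection_step
    {d N : ℕ} (hN : 2 * d < N)
    {M : Type*} [TopologicalSpace M] [ChartedSpace (EuclideanSpace ℝ (Fin d)) M]
    [IsManifold (𝓡 d) (⊤ : ℕ∞) M] [CompactSpace M]
    (f : M → EuclideanSpace ℝ (Fin N))
    (hf : ContMDiff (𝓡 d) 𝓘(ℝ, EuclideanSpace ℝ (Fin N)) (⊤ : ℕ∞) f)
    (himm : ∀ x : M, Function.Injective
      (mfderiv (𝓡 d) 𝓘(ℝ, EuclideanSpace ℝ (Fin N)) f x)) :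
    ∃ v : EuclideanSpace ℝ (Fin N), ‖v‖ = 1 ∧
      (ContMDiff (𝓡 d) 𝓘(ℝ, EuclideanSpace ℝ (Fin N)) (⊤ : ℕ∞)
        (fun x => f x - ⟪v, f x⟫ • v)) ∧
      (∀ x : M, Function.Injective
        (mfderiv (𝓡 d) 𝓘(ℝ, EuclideanSpace ℝ (Fin N))
          (fun x => f x - ⟪v, f x⟫ • v) x)) := by
  have hf₂ : ContMDiff (𝓡 d) 𝓘(ℝ, EuclideanSpace ℝ (Fin N)) 2 f := hf.of_le (by norm_cast)
  have hdim := hf₂.dimH_iUnion_range_mfderiv_le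
  rw [finrank_euclideanSpace_fin] at hdim
  obtain ⟨v, hv, hvB⟩ := exists_norm_eq_one_notMem_of_dimH_lt
    (hdim.trans_lt (by rw [finrank_euclideanSpace_fin]; exact_mod_cast hN))
    (by rintro c _ ⟨_, ⟨y, rfl⟩, u, rfl⟩; exact mem_iUnion.2 ⟨y, c • u, map_smul _ c u⟩)
  set P := (ℝ ∙ v)ᗮ.starProjection
  have hP : (fun x => f x - ⟪v, f x⟫ • v) = P ∘ f :=
    funext fun x => (starProjection_orthogonal_unit_singleton hv (f x)).symm
  have hPf : ContMDiff (𝓡 d) 𝓘(ℝ, EuclideanSpace ℝ (Fin N)) (⊤ : ℕ∞) (P ∘ f) :=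
    P.contMDiff.comp hf
  refine ⟨v, hv, hP ▸ hPf, fun x => ?_⟩
  have hD : HasMFDerivAt (𝓡 d) 𝓘(ℝ, EuclideanSpace ℝ (Fin N)) (P ∘ f) x
      (P.comp (mfderiv (𝓡 d) 𝓘(ℝ, EuclideanSpace ℝ (Fin N)) f x)) :=
    P.hasMFDerivAt.comp x (hf.mdifferentiableAt (x := x) (by simp)).hasMFDerivAt
  rw [hP, hD.mfderiv]
  exact injective_starProjection_orthogonal_singleton_comp (v := v)
    (D := (mfderiv (𝓡 d) 𝓘(ℝ, EuclideanSpace ℝ (Fin N)) f x :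
      EuclideanSpace ℝ (Fin d) →L[ℝ] EuclideanSpace ℝ (Fin N)).toLinearMap)
    (himm x) fun ⟨u, hu⟩ => hvB (mem_iUnion.2 ⟨x, u, hu⟩)
end
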